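/- arXiv:1007.4143 — 2 statements merged into one kernel-verified Lean document; each statement's English description precedes it below -/
import Mathlib

section
/- If the orthogonal projections π_F and π_α commute, then (π_F − π_F^⊥)(π_α − π_α^⊥) = π_G − π_G^⊥, where G is the subspace G = (α ∩ F) ⊕ (α^⊥ ∩ F^⊥) (an orthogonal direct sum). -/
/-!
Write `P = π_F` and `Q = π_α`. Because they commute, `QP` is the orthogonal projection onto
`α ⊓ F` and `(1 - Q)(1 - P)` the one onto `αᗮ ⊓ Fᗮ`. These two subspaces are orthogonal, so the
projection onto their sum `G` is `QP + (1 - Q)(1 - P)`, and expanding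
`(2P - 1)(2Q - 1) = 2(QP + (1 - Q)(1 - P)) - 1` gives `π_G - π_Gᗮ`.
-/

/-- The orthogonal projection of `V` onto the subspace `F`, as an endomorphism of `V`. -/
noncomputable def proj {V : Type*} [NormedAddCommGroup V] [InnerProductSpace ℂ V]
    [FiniteDimensional ℂ V] (F : Submodule ℂ V) : V →L[ℂ] V :=
  F.subtypeL.comp (F.orthogonalProjectionOnto)

/-- The self-adjoint unitary involution `π_F − π_F^⊥` associated to a subspace `F`
(the image of `F` under the Cartan embedding), where `π_F^⊥ = 1 − π_F`. -/
noncomputable def invo {V : Type*} [NormedAddCommGroup V] [InnerProductSpace ℂ V]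
    [FiniteDimensional ℂ V] (F : Submodule ℂ V) : V →L[ℂ] V :=
  proj F - (1 - proj F)

namespace Submodule

variable {𝕜 E : Type*} [RCLike 𝕜] [NormedAddCommGroup E] [InnerProductSpace 𝕜 E]
  {U V : Submodule 𝕜 E} [U.HasOrthogonalProjection] [V.HasOrthogonalProjection]

theorem starProjection_inf_of_commute [(U ⊓ V).HasOrthogonalProjection]
    (h : Commute U.starProjection V.starProjection) :
    (U ⊓ V).starProjection = U.starProjection * V.starProjection := by
  ext x
  refine eq_starProjection_of_mem_of_inner_eq_zero ⟨coe_mem _, ?_⟩ fun w ⟨hwU, hwV⟩ ↦ ?_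
  · rw [h.eq]
    exact coe_mem _
  · rw [mul_apply_eq_comp, inner_sub_left, inner_starProjection_left_eq_right,
      starProjection_eq_self_iff.2 hwU, inner_starProjection_left_eq_right,
      starProjection_eq_self_iff.2 hwV, sub_self]

theorem IsOrtho.starProjection_sup [(U ⊔ V).HasOrthogonalProjection] (h : U ⟂ V) :
    (U ⊔ V).starProjection = U.starProjection + V.starProjection := by
  ext x
  refine eq_starProjection_of_mem_of_inner_eq_zero (add_mem_sup (coe_mem _) (coe_mem _)) ?_
  intro w hw
  obtain ⟨u, hu, v, hv, rfl⟩ := mem_sup.1 hw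
  have hxu := starProjection_inner_eq_zero x u hu
  have hxv := starProjection_inner_eq_zero x v hv
  rw [inner_sub_left] at hxu hxv
  simp only [add_apply, inner_sub_left, inner_add_left, inner_add_right]
  linear_combination hxu + hxv - h.inner_eq (U.starProjection_apply_mem x) hv -
    h.symm.inner_eq (V.starProjection_apply_mem x) hu

end Submodule

open Submodule

theorem proj_eq_starProjection {V : Type*} [NormedAddCommGroup V] [InnerProductSpace ℂ V]
    [FiniteDimensional ℂ V] (F : Submodule ℂ V) : proj F = F.starProjection :=
  rfl

/-- If `π_F` and `π_α` commute, then
`(π_F − π_F^⊥)(π_α − π_α^⊥) = π_G − π_G^⊥` where `G = (α ∩ F) ⊕ (α^⊥ ∩ F^⊥)`. -/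
theorem invo_mul_invo_eq_invo {V : Type*} [NormedAddCommGroup V]
    [InnerProductSpace ℂ V] [FiniteDimensional ℂ V] (F α : Submodule ℂ V)
    (h : proj F ∘L proj α = proj α ∘L proj F) :
    invo F ∘L invo α = invo ((α ⊓ F) ⊔ (αᗮ ⊓ Fᗮ)) := by
  simp only [invo, proj_eq_starProjection] at h ⊢
  rw [← ContinuousLinearMap.mul_def]
  set P := F.starProjection
  set Q := α.starProjection
  have hcomm : Commute Q P := h.symm
  have hcomm' : Commute αᗮ.starProjection Fᗮ.starProjection := by
    rw [starProjection_orthogonal', starProjection_orthogonal']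
    exact (Commute.one_right _).sub_right ((Commute.one_left _).sub_left hcomm)
  have hortho : α ⊓ F ⟂ αᗮ ⊓ Fᗮ := α.isOrtho_orthogonal_right.mono inf_le_left inf_le_left
  have hG : ((α ⊓ F) ⊔ (αᗮ ⊓ Fᗮ)).starProjection = Q * P + (1 - Q) * (1 - P) := by
    rw [hortho.starProjection_sup, starProjection_inf_of_commute hcomm,
      starProjection_inf_of_commute hcomm', starProjection_orthogonal', starProjection_orthogonal']
  rw [hG]
  noncomm_ring [hcomm.eq]
end

section
/- Assume p_l + q_l = 1 in R for every l. Let M be a (left) R-module and H_1, …, H_i elements of M. Then Σ_{t=0}^{i−1} C^{i−1}_t H_{t+1} = Σ_{l=0}^{i−1} S^{i−1}_l ( Σ_{t=0}^{l} binom(l, t) H_{t+1} ), where binom(l,t) is the binomial coefficient. -/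
/-!
For a central indeterminate `X`, the generating polynomials `Σ_t C^n_t X^t` and
`Σ_l S^n_l Y^l` expand the products `(1 + q_n X) ⋯ (1 + q_1 X)` and `(p_n + q_n Y) ⋯ (p_1 + q_1 Y)`.
Since `p_k + q_k = 1`, the substitution `Y = X + 1` turns the second product into the first, so
`C^n_t = Σ_l binom(l, t) S^n_l` by comparing coefficients of `X^t`; the theorem follows by
exchanging the order of summation. The two expansions are compared through the one-step
recursions of `C` and `S`, with the variable multiplied on the right so that the noncommutative
coefficients never have to move past it.
-/

/-- The `s`'th elementary function of `q 1, …, q i`: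
`C^i_s = Σ_{1 ≤ i_1 < ⋯ < i_s ≤ i} q_{i_s} ⋯ q_{i_1}` (indices decreasing from left to
right), with `C^i_0 = 1` and `C^i_s = 0` for `s < 0` or `s > i`. -/
def elemC {R : Type*} [Ring R] (q : ℕ → R) (i : ℕ) (s : ℤ) : R :=
  ∑ T ∈ (Finset.Icc 1 i).powerset.filter (fun T => (T.card : ℤ) = s),
    (((T.sort (· ≤ ·)).reverse).map q).prod

/-- `S^i_j`: the sum of all ordered `i`-fold products `x_i x_{i−1} ⋯ x_1` in which each
factor `x_l` is either `p l` or `q l` and exactly `j` of the factors are `q`'s; by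
convention `S^0_0 = 1` and `S^i_j = 0` for `j < 0` or `j > i`. -/
def esS {R : Type*} [Ring R] (p q : ℕ → R) (i : ℕ) (j : ℤ) : R :=
  ∑ T ∈ (Finset.Icc 1 i).powerset.filter (fun T => (T.card : ℤ) = j),
    (((List.range i).reverse).map (fun l => if l + 1 ∈ T then q (l + 1) else p (l + 1))).prod

open Finset Polynomial

theorem Finset.reverse_sort_le {α : Type*} [LinearOrder α] (s : Finset α) :
    (s.sort (· ≤ ·)).reverse = s.sort (· ≥ ·) :=
  (s.sortedLT_sort).reverse.eq_of_mem_iff (s.sortedGT_sort) (by simp)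

theorem Finset.reverse_sort_insert_of_forall_lt {α : Type*} [LinearOrder α] {s : Finset α}
    {a : α} (h : ∀ b ∈ s, b < a) :
    ((insert a s).sort (· ≤ ·)).reverse = a :: (s.sort (· ≤ ·)).reverse := by
  simp only [reverse_sort_le]
  exact sort_insert _ (fun b hb => (h b hb).le) (fun ha => lt_irrefl a (h a ha))

theorem Finset.sum_powerset_insert_filter_card {α β : Type*} [DecidableEq α] [AddCommMonoid β]
    {s : Finset α} {a : α} (ha : a ∉ s) (k : ℤ) (f : Finset α → β) :
    ∑ T ∈ (insert a s).powerset with (T.card : ℤ) = k, f T =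
      ∑ T ∈ s.powerset with (T.card : ℤ) = k, f T +
        ∑ T ∈ s.powerset with (T.card : ℤ) = k - 1, f (insert a T) := by
  rw [sum_filter, sum_powerset_insert ha, sum_filter, sum_filter]
  congr 1
  refine sum_congr rfl fun T hT => ?_
  rw [card_insert_of_notMem fun h => ha (mem_powerset.1 hT h)]
  exact if_congr (by omega) rfl rfl

theorem Finset.filter_card_powerset_Icc_eq_empty {n : ℕ} {k : ℤ} (hk : k < 0 ∨ (n : ℤ) < k) :
    (Icc 1 n).powerset.filter (fun T => (T.card : ℤ) = k) = ∅ := by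
  refine filter_eq_empty_iff.2 fun T hT hTk => ?_
  have := (card_le_card (mem_powerset.1 hT)).trans_eq (Nat.card_Icc 1 n)
  omega

theorem sum_range_choose_smul_of_lt {M : Type*} [AddCommMonoid M] {l N : ℕ} (hl : l < N)
    (v : ℕ → M) :
    ∑ t ∈ range N, l.choose t • v t = ∑ t ∈ range (l + 1), l.choose t • v t := by
  refine (sum_subset (range_subset_range.2 hl) fun t _ ht => ?_).symm
  rw [Nat.choose_eq_zero_of_lt (by simpa using ht), zero_smul]

theorem sum_range_mul_pow_of_recurrence {A : Type*} [Semiring A] {f g : ℤ → A} {a b : A}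
    (Y : A) (n : ℕ) (hf : ∀ l, f l = a * g (l - 1) + b * g l) (hneg : g (-1) = 0)
    (htop : g (n + 1) = 0) :
    ∑ l ∈ range (n + 1 + 1), f l * Y ^ l =
      a * (∑ l ∈ range (n + 1), g l * Y ^ l) * Y + b * ∑ l ∈ range (n + 1), g l * Y ^ l := by
  simp only [hf, add_mul, sum_add_distrib, mul_sum, sum_mul]
  congr 1
  · rw [sum_range_succ']
    simp [hneg, pow_succ, mul_assoc]
  · rw [sum_range_succ]
    simp [htop, mul_assoc]

section

variable {R : Type*} [Ring R] (p q : ℕ → R)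

theorem elemC_eq_zero {n : ℕ} {s : ℤ} (hs : s < 0 ∨ (n : ℤ) < s) : elemC q n s = 0 := by
  rw [elemC, filter_card_powerset_Icc_eq_empty hs, sum_empty]

theorem esS_eq_zero {n : ℕ} {j : ℤ} (hj : j < 0 ∨ (n : ℤ) < j) : esS p q n j = 0 := by
  rw [esS, filter_card_powerset_Icc_eq_empty hj, sum_empty]

@[simp] theorem elemC_zero_zero : elemC q 0 0 = 1 := by
  simp [elemC, filter_singleton]

@[simp] theorem esS_zero_zero : esS p q 0 0 = 1 := by
  simp [esS, filter_singleton]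

theorem elemC_succ (n : ℕ) (s : ℤ) :
    elemC q (n + 1) s = q (n + 1) * elemC q n (s - 1) + elemC q n s := by
  have hn : n + 1 ∉ Icc 1 n := by simp
  rw [elemC, ← insert_Icc_right_eq_Icc_add_one (by omega), sum_powerset_insert_filter_card hn,
    add_comm, elemC, elemC, mul_sum]
  congr 1
  refine sum_congr rfl fun T hT => ?_
  have hlt : ∀ b ∈ T, b < n + 1 := fun b hb => by
    have := mem_Icc.1 (mem_powerset.1 (mem_filter.1 hT).1 hb)
    omega
  rw [reverse_sort_insert_of_forall_lt hlt, List.map_cons, List.prod_cons]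

theorem esS_succ (n : ℕ) (j : ℤ) :
    esS p q (n + 1) j = q (n + 1) * esS p q n (j - 1) + p (n + 1) * esS p q n j := by
  have hn : n + 1 ∉ Icc 1 n := by simp
  rw [esS, ← insert_Icc_right_eq_Icc_add_one (by omega), sum_powerset_insert_filter_card hn,
    add_comm, esS, esS, mul_sum, mul_sum]
  have hrange : (List.range (n + 1)).reverse = n :: (List.range n).reverse := by
    rw [List.range_succ, List.reverse_append, List.reverse_singleton, List.singleton_append]
  simp only [hrange, List.map_cons, List.prod_cons]
  congr 1 <;> refine sum_congr rfl fun T hT => ?_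
  · rw [if_pos (mem_insert_self _ _)]
    congr 2
    refine List.map_congr_left fun l hl => ?_
    have hl : l + 1 ≠ n + 1 := by
      rw [List.mem_reverse, List.mem_range] at hl
      omega
    simp only [mem_insert, hl, false_or]
  · have hT : n + 1 ∉ T := fun h => hn (mem_powerset.1 (mem_filter.1 hT).1 h)
    rw [if_neg hT]

variable {p q}

theorem sum_esS_mul_X_add_one_pow (hpq : ∀ l, p l + q l = 1) (n : ℕ) :
    ∑ l ∈ range (n + 1), C (esS p q n l) * (X + 1) ^ l =
      ∑ t ∈ range (n + 1), C (elemC q n t) * X ^ t := by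
  induction n with
  | zero => simp
  | succ n ih =>
    rw [sum_range_mul_pow_of_recurrence (f := fun l => C (esS p q (n + 1) l))
        (g := fun l => C (esS p q n l)) _ n
        (fun l => by rw [esS_succ, C_add, C_mul, C_mul]) (by simp [esS_eq_zero])
        (by simp [esS_eq_zero]),
      sum_range_mul_pow_of_recurrence (f := fun l => C (elemC q (n + 1) l))
        (g := fun l => C (elemC q n l)) (a := C (q (n + 1))) (b := 1) _ n
        (fun l => by rw [elemC_succ, C_add, C_mul, one_mul]) (by simp [elemC_eq_zero])
        (by simp [elemC_eq_zero]), ih, mul_add, mul_one, add_assoc, ← add_mul, ← C_add,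
      add_comm (q _), hpq, C_1]

theorem elemC_eq_sum_choose_smul_esS (hpq : ∀ l, p l + q l = 1) {n t : ℕ} (ht : t ≤ n) :
    elemC q n t = ∑ l ∈ range (n + 1), l.choose t • esS p q n l := by
  have h := congrArg (coeff · t) (sum_esS_mul_X_add_one_pow hpq n)
  simp only [finsetSum_coeff, coeff_C_mul, coeff_X_add_one_pow, coeff_X_pow, mul_ite, mul_one,
    mul_zero] at h
  rw [sum_ite_eq, if_pos (mem_range.2 (by omega))] at h
  rw [← h]
  exact sum_congr rfl fun l _ => (nsmul_eq_mul' _ _).symm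

end

theorem sum_elemC_smul_eq_sum_esS_smul_general {R M : Type*} [Ring R] [AddCommGroup M] [Module R M]
    (p q : ℕ → R) (hpq : ∀ l, p l + q l = 1)
    (i : ℕ) (H : ℕ → M) :
    ∑ t ∈ Finset.range i, elemC q (i - 1) (t : ℤ) • H (t + 1)
      = ∑ l ∈ Finset.range i, esS p q (i - 1) (l : ℤ) •
          (∑ t ∈ Finset.range (l + 1), (l.choose t) • H (t + 1)) := by
  rcases i with _ | n
  · simp
  rw [Nat.add_sub_cancel]
  calc ∑ t ∈ range (n + 1), elemC q n t • H (t + 1)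
      = ∑ t ∈ range (n + 1), ∑ l ∈ range (n + 1), l.choose t • esS p q n l • H (t + 1) := by
        refine sum_congr rfl fun t ht => ?_
        rw [elemC_eq_sum_choose_smul_esS hpq (Nat.lt_succ_iff.1 (mem_range.1 ht)), sum_smul]
        simp only [smul_assoc]
    _ = ∑ l ∈ range (n + 1), esS p q n l • ∑ t ∈ range (n + 1), l.choose t • H (t + 1) := by
        rw [sum_comm]
        simp only [smul_sum, smul_comm (esS p q n _)]
    _ = _ := sum_congr rfl fun l hl => by
        rw [sum_range_choose_smul_of_lt (mem_range.1 hl)]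

/-- If `p_l + q_l = 1` for every `l`, then for elements `H_1, …, H_i` of a left `R`-module:
`Σ_{t=0}^{i−1} C^{i−1}_t H_{t+1} = Σ_{l=0}^{i−1} S^{i−1}_l (Σ_{t=0}^{l} binom(l,t) H_{t+1})`. -/
theorem sum_elemC_smul_eq_sum_esS_smul {R M : Type*} [Ring R] [AddCommGroup M] [Module R M]
    (m : ℕ) (p q : ℕ → R) (hpq : ∀ l, p l + q l = 1)
    (i : ℕ) (hi1 : 1 ≤ i) (him : i ≤ m) (H : ℕ → M) :
    ∑ t ∈ Finset.range i, elemC q (i - 1) (t : ℤ) • H (t + 1)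
      = ∑ l ∈ Finset.range i, esS p q (i - 1) (l : ℤ) •
          (∑ t ∈ Finset.range (l + 1), (l.choose t) • H (t + 1)) :=
  sum_elemC_smul_eq_sum_esS_smul_general p q hpq i H
end
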